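/- Consistency of the constant-pressure outflow boundary condition on the D3Q19 lattice: let ρ ∈ ℝ, F = (F_x,F_y,F_z) ∈ ℝ³, and let f_0, f_1, f_2, f_3, f_4, f_5, f_7, f_8, f_9, f_10, f_11, f_14, f_15, f_18 ∈ ℝ be the known populations (those with c_{iz} ≥ 0). Define u_z by ρ(1+u_z) = f_0+f_1+f_2+f_3+f_4+f_7+f_8+f_9+f_10 + 2(f_5+f_11+f_14+f_15+f_18) + F_z/2 (assuming ρ ≠ 0), and define the unknown populations by: f_6 = f_5 − (1/3)ρu_z; f_12 = f_11 + (1/2)(f_1−f_2) + (1/2)(f_7−f_8) + (1/2)(f_9−f_10) + (1/8)(2F_x+F_z) − (1/6)ρu_z; f_13 = f_14 − (1/2)(f_1−f_2) − (1/2)(f_7−f_8) − (1/2)(f_9−f_10) − (1/8)(2F_x−F_z) − (1/6)ρu_z; f_16 = f_15 + (1/2)(f_3−f_4) + (1/2)(f_7−f_8) − (1/2)(f_9−f_10) + (1/8)(2F_y+F_z) − (1/6)ρu_z; f_17 = f_18 − (1/2)(f_3−f_4) − (1/2)(f_7−f_8) + (1/2)(f_9−f_10) − (1/8)(2F_y−F_z)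 − (1/6)ρu_z. Then the full set of 19 populations satisfies: Σ_{i=0}^{18} f_i = ρ, Σ_{i=0}^{18} c_{ix} f_i + F_x/2 = 0, Σ_{i=0}^{18} c_{iy} f_i + F_y/2 = 0, and Σ_{i=0}^{18} c_{iz} f_i + F_z/2 = ρ u_z; i.e., the prescribed density and the zero tangential velocities are exactly recovered. -/
import Mathlib


open Finset

/-- The 19 discrete velocities of the D3Q19 lattice. -/
def c : Fin 19 → Fin 3 → ℝ :=
  ![![0,0,0], ![1,0,0], ![-1,0,0], ![0,1,0], ![0,-1,0], ![0,0,1], ![0,0,-1],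
    ![1,1,0], ![-1,-1,0], ![1,-1,0], ![-1,1,0],
    ![1,0,1], ![-1,0,-1], ![1,0,-1], ![-1,0,1],
    ![0,1,1], ![0,-1,-1], ![0,1,-1], ![0,-1,1]]

/-- The D3Q19 lattice weights. -/
noncomputable def w : Fin 19 → ℝ :=
  ![1/3, 1/18, 1/18, 1/18, 1/18, 1/18, 1/18,
    1/36, 1/36, 1/36, 1/36, 1/36, 1/36, 1/36, 1/36, 1/36, 1/36, 1/36, 1/36]

/-- Consistency of the constant-pressure outflow boundary condition on the
D3Q19 lattice: with the unknown populations (those with `c_{iz} = -1`)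
reconstructed as prescribed, the full set of 19 populations recovers the
prescribed density, zero tangential velocities, and normal velocity `u_z`. -/
theorem d3q19_outflow_consistency
    (ρ Fx Fy Fz : ℝ) (hρ : ρ ≠ 0)
    (f0 f1 f2 f3 f4 f5 f7 f8 f9 f10 f11 f14 f15 f18 : ℝ)
    (uz : ℝ)
    (huz : ρ * (1 + uz) =
      f0 + f1 + f2 + f3 + f4 + f7 + f8 + f9 + f10
        + 2 * (f5 + f11 + f14 + f15 + f18) + Fz / 2)
    (f6 f12 f13 f16 f17 : ℝ)
    (h6 : f6 = f5 - (1/3) * ρ * uz)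
    (h12 : f12 = f11 + (1/2) * (f1 - f2) + (1/2) * (f7 - f8)
      + (1/2) * (f9 - f10) + (1/8) * (2 * Fx + Fz) - (1/6) * ρ * uz)
    (h13 : f13 = f14 - (1/2) * (f1 - f2) - (1/2) * (f7 - f8)
      - (1/2) * (f9 - f10) - (1/8) * (2 * Fx - Fz) - (1/6) * ρ * uz)
    (h16 : f16 = f15 + (1/2) * (f3 - f4) + (1/2) * (f7 - f8)
      - (1/2) * (f9 - f10) + (1/8) * (2 * Fy + Fz) - (1/6) * ρ * uz)
    (h17 : f17 = f18 - (1/2) * (f3 - f4) - (1/2) * (f7 - f8)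
      + (1/2) * (f9 - f10) - (1/8) * (2 * Fy - Fz) - (1/6) * ρ * uz) :
    letI f : Fin 19 → ℝ :=
      ![f0, f1, f2, f3, f4, f5, f6, f7, f8, f9, f10,
        f11, f12, f13, f14, f15, f16, f17, f18]
    (∑ i, f i) = ρ ∧
    (∑ i, c i 0 * f i) + Fx / 2 = 0 ∧
    (∑ i, c i 1 * f i) + Fy / 2 = 0 ∧
    (∑ i, c i 2 * f i) + Fz / 2 = ρ * uz := by
  refine ⟨?_, ?_, ?_, ?_⟩ <;>
    simp only [Fin.sum_univ_succ, Fin.sum_univ_zero, c, Matrix.cons_val_zero,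
      Matrix.cons_val_one, Matrix.head_cons, Matrix.cons_val_succ,
      Matrix.cons_val_two, Matrix.tail_cons] <;>
    subst h6 h12 h13 h16 h17 <;> ring_nf <;> ring_nf at huz ⊢ <;> linarith
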